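/- arXiv:1307.5625 — 2 statements merged into one kernel-verified Lean document; each statement's English description precedes it below -/
import Mathlib

section
/- (Proposition 5.1, Kan adjunction) Let φ : 𝔸 ⇸ 𝔹 be a Q-distributor. Then: (a) for every contravariant presheaf λ on 𝔹, φ*(λ) is a contravariant presheaf on 𝔸, and for every contravariant presheaf μ on 𝔸, φ_*(μ) is a contravariant presheaf on 𝔹; (b) for all such μ and λ, ⨅_{x∈A} (μ(x) ↙ φ*(λ)(x)) = ⨅_{y∈B} (φ_*(μ)(y) ↙ λ(y)), i.e. P𝔸(φ*(λ), μ) = P𝔹(λ, φ_*(μ)), so φ* is Q-enriched left adjoint to φ_*. -/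
open IsQuantale

variable {Q : Type*} [Monoid Q] [CompleteLattice Q] [IsQuantale Q]

/-- Left implication `x ↙ y`: the largest `z` with `z * y ≤ x`. -/
def lres (x y : Q) : Q := sSup {z | z * y ≤ x}

/-- Right implication `y ↘ x`: the largest `z` with `y * z ≤ x`. -/
def rres (y x : Q) : Q := sSup {z | y * z ≤ x}

/-- A Q-category structure on a type `A`. -/
structure IsQCat {A : Type*} (𝔸 : A → A → Q) : Prop where
  refl : ∀ x, 1 ≤ 𝔸 x x
  comp : ∀ x y z, 𝔸 y z * 𝔸 x y ≤ 𝔸 x z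

/-- A Q-distributor `φ : 𝔸 ⇸ 𝔹`. -/
structure IsQDist {A B : Type*} (𝔸 : A → A → Q) (𝔹 : B → B → Q) (φ : A → B → Q) : Prop where
  comp_left : ∀ x y y', 𝔹 y' y * φ x y' ≤ φ x y
  comp_right : ∀ x x' y, φ x' y * 𝔸 x x' ≤ φ x y

/-- A Q-functor `F : 𝔸 → 𝔹`. -/
def IsQFunctor {A B : Type*} (𝔸 : A → A → Q) (𝔹 : B → B → Q) (F : A → B) : Prop :=
  ∀ x x', 𝔸 x x' ≤ 𝔹 (F x) (F x')

/-- A contravariant presheaf on `𝔸`. -/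
def IsContraPsh {A : Type*} (𝔸 : A → A → Q) (μ : A → Q) : Prop :=
  ∀ x x', μ x' * 𝔸 x x' ≤ μ x

/-- A covariant presheaf on `𝔹`. -/
def IsCoPsh {B : Type*} (𝔹 : B → B → Q) (lam : B → Q) : Prop :=
  ∀ y y', 𝔹 y y' * lam y ≤ lam y'

/-- `φ↑(μ)(y) = ⨅ x, φ(x,y) ↙ μ(x)`. -/
def phiUp {A B : Type*} (φ : A → B → Q) (μ : A → Q) : B → Q :=
  fun y => ⨅ x, lres (φ x y) (μ x)

/-- `φ↓(λ)(x) = ⨅ y, λ(y) ↘ φ(x,y)`. -/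
def phiDown {A B : Type*} (φ : A → B → Q) (lam : B → Q) : A → Q :=
  fun x => ⨅ y, rres (lam y) (φ x y)

/-- `φ*(λ)(x) = ⨆ y, λ(y) * φ(x,y)`. -/
def phiStar {A B : Type*} (φ : A → B → Q) (lam : B → Q) : A → Q :=
  fun x => ⨆ y, lam y * φ x y

/-- `φ_*(μ)(y) = ⨅ x, μ(x) ↙ φ(x,y)`. -/
def phiLow {A B : Type*} (φ : A → B → Q) (μ : A → Q) : B → Q :=
  fun y => ⨅ x, lres (μ x) (φ x y)

/-- The underlying set of the Q-category `P𝔸` of contravariant presheaves. -/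
abbrev CPsh {A : Type*} (𝔸 : A → A → Q) := {μ : A → Q // ∀ x x', μ x' * 𝔸 x x' ≤ μ x}

/-- The underlying set of the Q-category `P†𝔹` of covariant presheaves. -/
abbrev CoPsh {B : Type*} (𝔹 : B → B → Q) := {lam : B → Q // ∀ y y', 𝔹 y y' * lam y ≤ lam y'}

/-- The Yoneda embedding `x ↦ 𝔸(·,x)`. -/
def yonedaP {A : Type*} {𝔸 : A → A → Q} (hA : IsQCat 𝔸) (x : A) : CPsh 𝔸 :=
  ⟨fun x' => 𝔸 x' x, fun a b => hA.comp a b x⟩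


theorem le_lres_iff {x y z : Q} : z ≤ lres x y ↔ z * y ≤ x :=
  Quantale.leftMulResiduation_le_iff_mul_le

/-- Proposition 5.1: the Kan adjunction `φ* ⊣ φ_*` induced by a Q-distributor. -/
theorem kan_adjunction {A B : Type*} {𝔸 : A → A → Q} {𝔹 : B → B → Q}
    (hA : IsQCat 𝔸) (hB : IsQCat 𝔹) (φ : A → B → Q) (hφ : IsQDist 𝔸 𝔹 φ) :
    (∀ lam : B → Q, IsContraPsh 𝔹 lam → IsContraPsh 𝔸 (phiStar φ lam)) ∧
    (∀ μ : A → Q, IsContraPsh 𝔸 μ → IsContraPsh 𝔹 (phiLow φ μ)) ∧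
    (∀ (μ : A → Q) (lam : B → Q), IsContraPsh 𝔸 μ → IsContraPsh 𝔹 lam →
      (⨅ x, lres (μ x) (phiStar φ lam x)) = ⨅ y, lres (phiLow φ μ y) (lam y)) := by
  have hStar : ∀ lam : B → Q, IsContraPsh 𝔹 lam → IsContraPsh 𝔸 (phiStar φ lam) := by
    intro lam _ x x'
    rw [phiStar, Quantale.iSup_mul_distrib]
    refine iSup_le fun y => ?_
    rw [mul_assoc]
    exact le_trans (mul_le_mul_right (hφ.comp_right x x' y) _) (le_iSup (fun y => lam y * φ x y) y)
  have hLow : ∀ μ : A → Q, IsContraPsh 𝔸 μ → IsContraPsh 𝔹 (phiLow φ μ) := by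
    intro μ _ y y'
    refine le_iInf fun x => le_lres_iff.mpr ?_
    rw [mul_assoc]
    calc phiLow φ μ y' * (𝔹 y y' * φ x y) ≤ phiLow φ μ y' * φ x y' :=
          mul_le_mul_right (hφ.comp_left x y' y) _
      _ ≤ μ x := le_lres_iff.mp (iInf_le (fun x => lres (μ x) (φ x y')) x)
  refine ⟨hStar, hLow, fun μ lam _ _ => ?_⟩
  apply eq_of_forall_le_iff
  intro z
  constructor
  · intro h
    refine le_iInf fun y => le_lres_iff.mpr (le_iInf fun x => le_lres_iff.mpr ?_)
    rw [mul_assoc]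
    exact le_trans (mul_le_mul_right
      (le_trans (le_iSup (fun y => lam y * φ x y) y) le_rfl) _)
      (le_lres_iff.mp (le_trans h (iInf_le _ x)))
  · intro h
    refine le_iInf fun x => le_lres_iff.mpr ?_
    rw [phiStar, Quantale.mul_iSup_distrib]
    refine iSup_le fun y => ?_
    rw [← mul_assoc]
    calc z * lam y * φ x y ≤ phiLow φ μ y * φ x y :=
          mul_le_mul_left (le_lres_iff.mp (le_trans h (iInf_le _ y))) _
      _ ≤ μ x := le_lres_iff.mp (iInf_le (fun x => lres (μ x) (φ x y)) x)
end

section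
/- (Corollary 5.5) Let F : 𝔸 → 𝔹 be a fully faithful Q-functor. Then for every contravariant presheaf μ on 𝔸 and every x ∈ A: (1) ⨆_{y∈B} ( (⨆_{x'∈A} (μ(x') * 𝔹(y,Fx'))) * 𝔹(Fx,y) ) = μ(x) (i.e. (F♮)*(μ) ∘ F_♮ = μ); and (2) ⨆_{y∈B} ( (⨅_{x'∈A} (μ(x') ↙ 𝔹(Fx',y))) * 𝔹(Fx,y) ) = μ(x) (i.e. (F_♮)_*(μ) ∘ F_♮ = μ). -/
open IsQuantale

variable {Q : Type*} [Monoid Q] [CompleteLattice Q] [IsQuantale Q]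

lemma lres_mul_le (a b : Q) : lres a b * b ≤ a := by
  rw [lres, sSup_mul_distrib]
  exact iSup_le fun z => iSup_le fun hz => hz

lemma iSup_mul_le_q {ι : Sort*} {f : ι → Q} {b c : Q} (h : ∀ i, f i * b ≤ c) :
    (⨆ i, f i) * b ≤ c := by
  rw [iSup, sSup_mul_distrib]
  refine iSup_le fun z => iSup_le fun hz => ?_
  obtain ⟨i, rfl⟩ := hz
  exact h i

lemma le_lres {a b z : Q} (h : z * b ≤ a) : z ≤ lres a b := le_sSup h

/-- Corollary 5.5: for a fully faithful `F`, both `(F♮)*` and `(F_♮)_*` are extensions: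
`(F♮)*(μ) ∘ F_♮ = μ` and `(F_♮)_*(μ) ∘ F_♮ = μ`. -/
theorem kan_extensions_fully_faithful {A B : Type*} {𝔸 : A → A → Q} {𝔹 : B → B → Q}
    (hA : IsQCat 𝔸) (hB : IsQCat 𝔹) (F : A → B)
    (hff : ∀ x x', 𝔸 x x' = 𝔹 (F x) (F x')) :
    ∀ μ : A → Q, IsContraPsh 𝔸 μ → ∀ x : A,
      (⨆ y, (⨆ x', μ x' * 𝔹 y (F x')) * 𝔹 (F x) y) = μ x ∧
      (⨆ y, (⨅ x', lres (μ x') (𝔹 (F x') y)) * 𝔹 (F x) y) = μ x := by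
  intro μ hμ x
  have hFx : (1 : Q) ≤ 𝔹 (F x) (F x) := (hff x x) ▸ hA.refl x
  constructor
  · apply le_antisymm
    · apply iSup_le; intro y
      apply iSup_mul_le_q; intro x'
      calc μ x' * 𝔹 y (F x') * 𝔹 (F x) y
          ≤ μ x' * 𝔹 (F x) (F x') := by
            rw [mul_assoc]
            exact mul_le_mul_right (hB.comp _ _ _) _
        _ = μ x' * 𝔸 x x' := by rw [hff]
        _ ≤ μ x := hμ x x'
    · calc μ x = μ x * 1 * 1 := by simp
        _ ≤ μ x * 𝔹 (F x) (F x) * 𝔹 (F x) (F x) :=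
            mul_le_mul' (mul_le_mul_right hFx _) hFx
        _ ≤ (⨆ x', μ x' * 𝔹 (F x) (F x')) * 𝔹 (F x) (F x) :=
            mul_le_mul_left (le_iSup (fun x' => μ x' * 𝔹 (F x) (F x')) x) _
        _ ≤ _ := le_iSup (fun y => (⨆ x', μ x' * 𝔹 y (F x')) * 𝔹 (F x) y) (F x)
  · apply le_antisymm
    · apply iSup_le; intro y
      calc (⨅ x', lres (μ x') (𝔹 (F x') y)) * 𝔹 (F x) y
          ≤ lres (μ x) (𝔹 (F x) y) * 𝔹 (F x) y :=
            mul_le_mul_left (iInf_le _ x) _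
        _ ≤ μ x := lres_mul_le _ _
    · have h1 : μ x ≤ ⨅ x', lres (μ x') (𝔹 (F x') (F x)) := by
        apply le_iInf; intro x'
        apply le_lres
        rw [← hff]
        exact hμ x' x
      calc μ x = μ x * 1 := by simp
        _ ≤ (⨅ x', lres (μ x') (𝔹 (F x') (F x))) * 𝔹 (F x) (F x) := mul_le_mul' h1 hFx
        _ ≤ _ := le_iSup (fun y => (⨅ x', lres (μ x') (𝔹 (F x') y)) * 𝔹 (F x) y) (F x)
end
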